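/- arXiv:1609.00563 — 4 statements merged into one kernel-verified Lean document; each statement's English description precedes it below -/
import Mathlib

section
/- Consider the restless-bandit LP with a fixed population, i.e. λ_k = 0 for every class k (so that constraint (iii) is imposed for every k). If the feasible set of (LP) is nonempty, then (LP) admits an optimal solution x* = (x*^a_{j,k}) with the property that x*^0_{j,k} · x*^1_{j,k} > 0 for at most one pair (j,k); that is, with the possible exception of a single state–class pair, every pair (j,k) has x*^0_{j,k} = 0 or x*^1_{j,k} = 0. -/
open Finset

/-- Feasibility for the restless-bandit LP:
(i) balance equations, (ii) capacity constraint, (iii) fixed total mass for classes with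
zero arrival rate, (iv) nonnegativity.  Here `x k j a` is the mass of class-`k` bandits in
state `j` under action `a`, and `q k j i a` is the transition rate `q_k(j|i,a)`. -/
def LPFeasible {K : ℕ} {J : Fin K → ℕ} (lam : Fin K → ℝ)
    (p : (k : Fin K) → Fin (J k) → ℝ)
    (q : (k : Fin K) → Fin (J k) → Fin (J k) → Fin 2 → ℝ)
    (α : ℝ) (xinit : Fin K → ℝ)
    (x : (k : Fin K) → Fin (J k) → Fin 2 → ℝ) : Prop :=
  (∀ k j, 0 = lam k * p k j + ∑ a : Fin 2, ∑ i, x k i a * q k j i a) ∧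
  (∑ k, ∑ j, x k j 1 ≤ α) ∧
  (∀ k, lam k = 0 → ∑ j, ∑ a : Fin 2, x k j a = xinit k) ∧
  (∀ k j a, 0 ≤ x k j a)

/-- The objective of the restless-bandit LP. -/
def LPCost {K : ℕ} {J : Fin K → ℕ}
    (C : (k : Fin K) → Fin (J k) → Fin 2 → ℝ)
    (x : (k : Fin K) → Fin (J k) → Fin 2 → ℝ) : ℝ :=
  ∑ k, ∑ j, ∑ a : Fin 2, C k j a * x k j a

/-!
Among the optimal solutions, a nonempty compact face of the compact feasible set, pick an
extreme point `x` (Krein–Milman); it is then an extreme point of the feasible set. Suppose two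
distinct pairs `s ≠ t` carry mass under both actions. On the support of `x` the balance rows
vanish at unoccupied states and sum to zero within each class (departures to the absorbing
state vanish there), so balance rows and class masses together impose only one condition per
occupied state, plus the capacity row. The support has at least two more variables than there
are occupied states, so some `d ≠ 0` supported on the support of `x` satisfies all homogeneous
constraints, and `x ± ε d` are feasible for small `ε > 0`, contradicting extremality.
-/

open Filter Topology

section ExtremePoints

variable {E : Type*} [AddCommGroup E] [Module ℝ E] [TopologicalSpace E] [T2Space E]
  [IsTopologicalAddGroup E] [ContinuousSMul ℝ E] [LocallyConvexSpace ℝ E] {S : Set E}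

theorem IsCompact.exists_mem_extremePoints_isMinOn (hS : IsCompact S) (hne : S.Nonempty)
    (c : E →L[ℝ] ℝ) : ∃ x ∈ S.extremePoints ℝ, IsMinOn c S x := by
  have hexp : IsExposed ℝ S {x ∈ S | ∀ y ∈ S, (-c) y ≤ (-c) x} := fun _ => ⟨-c, rfl⟩
  obtain ⟨x₀, hx₀S, hx₀⟩ := hS.exists_isMinOn hne c.continuous.continuousOn
  obtain ⟨x, hx⟩ := (hexp.isCompact hS).extremePoints_nonempty
    ⟨x₀, hx₀S, fun y hy => neg_le_neg (hx₀ hy)⟩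
  exact ⟨x, hexp.isExtreme.extremePoints_subset_extremePoints hx,
    fun y hy => by simpa using hx.1.2 y hy⟩

end ExtremePoints

theorem eq_zero_of_add_mem_of_sub_mem_of_mem_extremePoints {𝕜 E : Type*} [Field 𝕜]
    [LinearOrder 𝕜] [IsStrictOrderedRing 𝕜] [AddCommGroup E] [Module 𝕜 E] {A : Set E} {x w : E}
    (hx : x ∈ A.extremePoints 𝕜) (hadd : x + w ∈ A) (hsub : x - w ∈ A) : w = 0 := by
  have hmid : x ∈ openSegment 𝕜 (x + w) (x - w) :=
    ⟨1 / 2, 1 / 2, by norm_num, by norm_num, by norm_num, by module⟩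
  simpa using hx.2 hadd hsub hmid

theorem eq_zero_of_sum_sum_eq_zero_of_nonneg {α β : Type*} [Fintype α] [Fintype β]
    {f : α → β → ℝ} (hf : ∀ a b, 0 ≤ f a b) (hsum : ∑ a, ∑ b, f a b = 0) (a : α) (b : β) :
    f a b = 0 :=
  (sum_eq_zero_iff_of_nonneg fun b _ => hf a b).1
    ((sum_eq_zero_iff_of_nonneg fun a _ => sum_nonneg fun b _ => hf a b).1 hsum a (mem_univ a))
    b (mem_univ b)

theorem eventually_mul_abs_le {x d : ℝ} (hx : 0 ≤ x) (hd : x = 0 → d = 0) :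
    ∀ᶠ ε in 𝓝 (0 : ℝ), ε * |d| ≤ x := by
  rcases hx.eq_or_lt with rfl | hx
  · simp [hd rfl]
  · exact (continuous_id.mul continuous_const).tendsto' 0 0 (zero_mul _)
      |>.eventually (ge_mem_nhds hx)

section RateMatrix

variable {σ A : Type*} [Fintype σ] [Fintype A] {q : σ → σ → A → ℝ} {x y : σ → A → ℝ}

omit [Fintype A] in
theorem sum_rate_eq_neg_of_diag [DecidableEq σ] {q0 : σ → A → ℝ}
    (hdiag : ∀ j a, q j j a = -(q0 j a + ∑ i ∈ univ.filter (fun i => i ≠ j), q i j a))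
    (i : σ) (a : A) : ∑ j, q j i a = -q0 i a := by
  rw [← add_sum_erase _ _ (mem_univ i), hdiag, ← filter_ne']
  ring

theorem sum_inflow_eq_zero_of_supported (hcol : ∀ i a, ∑ j, q j i a ≤ 0)
    (hx : ∀ i a, 0 ≤ x i a) (hbal : ∀ j, ∑ a, ∑ i, x i a * q j i a = 0)
    (hy : ∀ i a, x i a = 0 → y i a = 0) :
    ∑ j, ∑ a, ∑ i, y i a * q j i a = 0 := by
  have hswap : ∀ z : σ → A → ℝ,
      ∑ j, ∑ a, ∑ i, z i a * q j i a = ∑ a, ∑ i, z i a * ∑ j, q j i a := by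
    intro z
    simp only [mul_sum]
    rw [sum_comm]
    exact sum_congr rfl fun a _ => sum_comm
  have hxcol : ∀ a i, x i a * ∑ j, q j i a = 0 := by
    refine fun a i => neg_eq_zero.mp (eq_zero_of_sum_sum_eq_zero_of_nonneg
      (f := fun a i => -(x i a * ∑ j, q j i a)) (fun a i => ?_) ?_ a i)
    · exact neg_nonneg.mpr (mul_nonpos_of_nonneg_of_nonpos (hx i a) (hcol i a))
    · simp only [sum_neg_distrib, ← hswap, hbal, sum_const_zero, neg_zero]
  rw [hswap]
  refine sum_eq_zero fun a _ => sum_eq_zero fun i _ => ?_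
  rcases eq_or_ne (x i a) 0 with hxi | hxi
  · rw [hy i a hxi, zero_mul]
  · rw [(mul_eq_zero.mp (hxcol a i)).resolve_left hxi, mul_zero]

theorem inflow_eq_zero_of_unoccupied (hq : ∀ j i a, j ≠ i → 0 ≤ q j i a)
    (hx : ∀ i a, 0 ≤ x i a) {j : σ} (hbal : ∑ a, ∑ i, x i a * q j i a = 0)
    (hj : ∀ a, x j a = 0) (hy : ∀ i a, x i a = 0 → y i a = 0) :
    ∑ a, ∑ i, y i a * q j i a = 0 := by
  have hterm : ∀ a i, x i a * q j i a = 0 := by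
    refine eq_zero_of_sum_sum_eq_zero_of_nonneg (fun a i => ?_) hbal
    rcases eq_or_ne j i with rfl | hji
    · rw [hj a, zero_mul]
    · exact mul_nonneg (hx i a) (hq j i a hji)
  refine sum_eq_zero fun a _ => sum_eq_zero fun i _ => ?_
  rcases eq_or_ne (x i a) 0 with hxi | hxi
  · rw [hy i a hxi, zero_mul]
  · rw [(mul_eq_zero.mp (hterm a i)).resolve_left hxi, mul_zero]

end RateMatrix

theorem card_exists_add_one_lt_card {σ A : Type*} [Fintype σ] [Fintype A]
    (P : σ → A → Prop) {s t : σ} (hst : s ≠ t) {a₀ a₁ : A} (ha : a₀ ≠ a₁)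
    (hs₀ : P s a₀) (hs₁ : P s a₁) (ht₀ : P t a₀) (ht₁ : P t a₁) :
    Nat.card {o // ∃ a, P o a} + 1 < Nat.card {p : σ × A // P p.1 p.2} := by
  classical
  -- Preferring `a₀` keeps `(s, a₁)` and `(t, a₁)` out of the image of the occupied states.
  let act : {o // ∃ a, P o a} → A := fun o => if P o a₀ then a₀ else o.2.choose
  have hact : ∀ o : {o // ∃ a, P o a}, P o (act o) := fun o => by
    by_cases h : P o a₀
    · simp [act, h]
    · simpa [act, h] using o.2.choose_spec
  have hact₀ : ∀ o : {o // ∃ a, P o a}, P o a₀ → act o ≠ a₁ := fun o h => by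
    simpa [act, h] using ha
  let f : {o // ∃ a, P o a} ⊕ Unit → {p : σ × A // P p.1 p.2} :=
    Sum.elim (fun o => ⟨(o, act o), hact o⟩) fun _ => ⟨(s, a₁), hs₁⟩
  have hf : Function.Injective f := by
    rintro (o | _) (o' | _) h <;>
      simp only [f, Sum.elim_inl, Sum.elim_inr, Subtype.mk.injEq, Prod.mk.injEq] at h
    · exact congrArg Sum.inl (Subtype.ext h.1)
    · exact absurd h.2 (hact₀ o (h.1 ▸ hs₀))
    · exact absurd h.2.symm (hact₀ o' (h.1 ▸ hs₀))
    · rfl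
  have hnot : ⟨(t, a₁), ht₁⟩ ∉ Set.range f := by
    rintro ⟨o | _, h⟩ <;>
      simp only [f, Sum.elim_inl, Sum.elim_inr, Subtype.mk.injEq, Prod.mk.injEq] at h
    · exact hact₀ o (h.1 ▸ ht₀) h.2
    · exact hst h.1
  simpa [Nat.card_eq_fintype_card] using Fintype.card_lt_of_injective_of_notMem f hf hnot

theorem eq_zero_of_sum_eq_zero_of_add_eq_zero {σ : Type*} [Fintype σ] {r : σ → ℝ} {m : ℝ}
    (P : σ → Prop) (hsum : ∑ j, r j = 0) (hP : ∀ j, P j → r j + m = 0)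
    (hnP : ∀ j, ¬ P j → r j = 0) (hm : (∀ j, ¬ P j) → m = 0) : m = 0 ∧ ∀ j, r j = 0 := by
  classical
  have hm0 : m = 0 := by
    by_cases h : ∃ j, P j
    · have : ∑ j, r j = ∑ j ∈ univ.filter P, -m := by
        rw [sum_filter]
        exact sum_congr rfl fun j _ => by
          split_ifs with hj
          · linarith [hP j hj]
          · exact hnP j hj
      rw [hsum, sum_const, nsmul_eq_mul] at this
      have hcard : (#(univ.filter P) : ℝ) ≠ 0 := by
        obtain ⟨j, hj⟩ := h
        exact Nat.cast_ne_zero.mpr (card_ne_zero_of_mem (mem_filter.mpr ⟨mem_univ j, hj⟩))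
      linarith [(mul_eq_zero.mp this.symm).resolve_left hcard]
    · exact hm (not_exists.mp h)
  refine ⟨hm0, fun j => ?_⟩
  by_cases hj : P j
  · linarith [hP j hj]
  · exact hnP j hj

section LP

variable {K : ℕ} {J : Fin K → ℕ}

def balanceRow (q : (k : Fin K) → Fin (J k) → Fin (J k) → Fin 2 → ℝ) (k : Fin K)
    (j : Fin (J k)) : ((k : Fin K) → Fin (J k) → Fin 2 → ℝ) →ₗ[ℝ] ℝ where
  toFun y := ∑ a : Fin 2, ∑ i, y k i a * q k j i a
  map_add' y z := by simp only [Pi.add_apply, add_mul, sum_add_distrib]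
  map_smul' c y := by
    simp only [Pi.smul_apply, smul_eq_mul, mul_assoc, mul_sum, RingHom.id_apply]

def classMass (k : Fin K) : ((k : Fin K) → Fin (J k) → Fin 2 → ℝ) →ₗ[ℝ] ℝ where
  toFun y := ∑ j, ∑ a : Fin 2, y k j a
  map_add' y z := by simp only [Pi.add_apply, sum_add_distrib]
  map_smul' c y := by simp only [Pi.smul_apply, smul_eq_mul, mul_sum, RingHom.id_apply]

def activeMass : ((k : Fin K) → Fin (J k) → Fin 2 → ℝ) →ₗ[ℝ] ℝ where
  toFun y := ∑ k, ∑ j, y k j 1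
  map_add' y z := by simp only [Pi.add_apply, sum_add_distrib]
  map_smul' c y := by simp only [Pi.smul_apply, smul_eq_mul, mul_sum, RingHom.id_apply]

noncomputable def lpCostCLM (C : (k : Fin K) → Fin (J k) → Fin 2 → ℝ) :
    ((k : Fin K) → Fin (J k) → Fin 2 → ℝ) →L[ℝ] ℝ :=
  LinearMap.toContinuousLinearMap
    { toFun := LPCost C
      map_add' := fun y z => by simp only [LPCost, Pi.add_apply, mul_add, sum_add_distrib]
      map_smul' := fun c y => by
        simp only [LPCost, Pi.smul_apply, smul_eq_mul, mul_left_comm, mul_sum,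
          RingHom.id_apply] }

def constraintKernel (q : (k : Fin K) → Fin (J k) → Fin (J k) → Fin 2 → ℝ) :
    Submodule ℝ ((k : Fin K) → Fin (J k) → Fin 2 → ℝ) :=
  (⨅ k, ⨅ j, LinearMap.ker (balanceRow q k j)) ⊓ (⨅ k, LinearMap.ker (classMass k)) ⊓
    LinearMap.ker activeMass

variable {lam : Fin K → ℝ} {p : (k : Fin K) → Fin (J k) → ℝ}
  {q : (k : Fin K) → Fin (J k) → Fin (J k) → Fin 2 → ℝ} {α : ℝ} {xinit : Fin K → ℝ}
  {x w d : (k : Fin K) → Fin (J k) → Fin 2 → ℝ} {s t : Σ k : Fin K, Fin (J k)}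

theorem mem_constraintKernel : w ∈ constraintKernel q ↔
    (∀ k j, balanceRow q k j w = 0) ∧ (∀ k, classMass k w = 0) ∧ activeMass w = 0 := by
  simp only [constraintKernel, Submodule.mem_inf, Submodule.mem_iInf, LinearMap.mem_ker,
    and_assoc]

theorem LPFeasible.add_of_mem_constraintKernel (hx : LPFeasible lam p q α xinit x)
    (hw : w ∈ constraintKernel q) (hnn : ∀ k j a, 0 ≤ x k j a + w k j a) :
    LPFeasible lam p q α xinit (x + w) := by
  obtain ⟨hbal, hcap, hmass, -⟩ := hx
  obtain ⟨hwbal, hwmass, hwact⟩ := mem_constraintKernel.mp hw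
  refine ⟨fun k j => ?_, ?_, fun k hk => ?_, hnn⟩
  · change 0 = lam k * p k j + balanceRow q k j (x + w)
    rw [map_add, hwbal, add_zero]
    exact hbal k j
  · change activeMass (x + w) ≤ α
    rw [map_add, hwact, add_zero]
    exact hcap
  · change classMass k (x + w) = xinit k
    rw [map_add, hwmass, add_zero]
    exact hmass k hk

theorem isClosed_setOf_LPFeasible : IsClosed {x | LPFeasible lam p q α xinit x} := by
  simp only [LPFeasible, Set.ofPred_and, Set.ofPred_forall]
  refine IsClosed.inter ?_ (IsClosed.inter ?_ (IsClosed.inter ?_ ?_))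
  · exact isClosed_iInter fun k => isClosed_iInter fun j => isClosed_eq (by fun_prop) (by fun_prop)
  · exact isClosed_le (by fun_prop) (by fun_prop)
  · exact isClosed_iInter fun k => isClosed_iInter fun _ => isClosed_eq (by fun_prop) (by fun_prop)
  · exact isClosed_iInter fun k => isClosed_iInter fun j => isClosed_iInter fun a =>
      isClosed_le (by fun_prop) (by fun_prop)

theorem LPFeasible.le_xinit (hfixed : ∀ k, lam k = 0) (hx : LPFeasible lam p q α xinit x)
    (k : Fin K) (j : Fin (J k)) (a : Fin 2) : x k j a ≤ xinit k := by
  obtain ⟨-, -, hmass, hnn⟩ := hx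
  calc x k j a ≤ ∑ a, x k j a := single_le_sum (fun a _ => hnn k j a) (mem_univ a)
    _ ≤ ∑ j, ∑ a, x k j a :=
      single_le_sum (f := fun j => ∑ a, x k j a) (fun j _ => sum_nonneg fun a _ => hnn k j a)
        (mem_univ j)
    _ = xinit k := hmass k (hfixed k)

theorem isCompact_setOf_LPFeasible (hfixed : ∀ k, lam k = 0) :
    IsCompact {x | LPFeasible lam p q α xinit x} :=
  (isCompact_Icc (a := 0) (b := fun k _ _ => xinit k)).of_isClosed_subset
    isClosed_setOf_LPFeasible fun _ hx => ⟨hx.2.2.2, hx.le_xinit hfixed⟩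

theorem LPFeasible.balanceRow_eq_zero (hfixed : ∀ k, lam k = 0)
    (hx : LPFeasible lam p q α xinit x) (k : Fin K) (j : Fin (J k)) : balanceRow q k j x = 0 := by
  have h := hx.1 k j
  rw [hfixed k, zero_mul, zero_add] at h
  exact h.symm

theorem LPFeasible.exists_pos_add_smul_and_sub_smul (hx : LPFeasible lam p q α xinit x)
    (hd : d ∈ constraintKernel q) (hsupp : ∀ k j a, x k j a = 0 → d k j a = 0) :
    ∃ ε > (0 : ℝ),
      LPFeasible lam p q α xinit (x + ε • d) ∧ LPFeasible lam p q α xinit (x - ε • d) := by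
  obtain ⟨ε, hε, hεd⟩ : ∃ ε > 0, ∀ k j a, ε * |d k j a| ≤ x k j a :=
    ((eventually_all.2 fun k => eventually_all.2 fun j => eventually_all.2 fun a =>
      eventually_mul_abs_le (hx.2.2.2 k j a) (hsupp k j a)).filter_mono nhdsWithin_le_nhds
        |>.and (self_mem_nhdsWithin (s := Set.Ioi 0))).exists.imp fun _ h => ⟨h.2, h.1⟩
  have hfeas (w) (hw : w ∈ constraintKernel q) (hwd : ∀ k j a, |w k j a| = ε * |d k j a|) :
      LPFeasible lam p q α xinit (x + w) :=
    hx.add_of_mem_constraintKernel hw fun k j a => by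
      linarith [neg_abs_le (w k j a), hwd k j a, hεd k j a]
  refine ⟨ε, hε, hfeas _ (Submodule.smul_mem _ ε hd) fun k j a => ?_, ?_⟩
  · simp [abs_mul, hε.le]
  · rw [sub_eq_add_neg]
    exact hfeas _ (neg_mem (Submodule.smul_mem _ ε hd)) fun k j a => by
      simp [abs_mul, hε.le]

open Module in
theorem exists_ne_zero_supported_balanceRow_add_classMass_eq_zero (hst : s ≠ t)
    (hs : ∀ a, x s.1 s.2 a ≠ 0) (ht : ∀ a, x t.1 t.2 a ≠ 0) :
    ∃ d ≠ 0, (∀ k j a, x k j a = 0 → d k j a = 0) ∧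
      (∀ k j, (∃ a, x k j a ≠ 0) → balanceRow q k j d + classMass k d = 0) ∧
      activeMass d = 0 := by
  classical
  let P : (Σ k : Fin K, Fin (J k)) → Fin 2 → Prop := fun o a => x o.1 o.2 a ≠ 0
  let Occ := {o // ∃ a, P o a}
  let Null := {z : (Σ k : Fin K, Fin (J k)) × Fin 2 // ¬ P z.1 z.2}
  -- Adding the class mass to every occupied balance row keeps one row per occupied state; the
  -- two are separated again in `exists_ne_zero_supported_mem_constraintKernel`.
  let F : ((k : Fin K) → Fin (J k) → Fin 2 → ℝ) →ₗ[ℝ] (Occ → ℝ) × ℝ × (Null → ℝ) :=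
    (LinearMap.pi fun o : Occ => balanceRow q o.1.1 o.1.2 + classMass o.1.1).prod
      (activeMass.prod (LinearMap.pi fun z : Null =>
        LinearMap.proj z.1.2 ∘ₗ LinearMap.proj z.1.1.2 ∘ₗ LinearMap.proj z.1.1.1))
  have hdim : finrank ℝ ((Occ → ℝ) × ℝ × (Null → ℝ)) <
      finrank ℝ ((k : Fin K) → Fin (J k) → Fin 2 → ℝ) := by
    have hcount := card_exists_add_one_lt_card P hst zero_ne_one (hs 0) (hs 1) (ht 0) (ht 1)
    have hsplit := Fintype.card_congr
      (Equiv.sumCompl fun z : (Σ k : Fin K, Fin (J k)) × Fin 2 => P z.1 z.2)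
    simp only [Fintype.card_sum, Fintype.card_prod, Fintype.card_sigma, Fintype.card_fin,
      sum_mul] at hsplit
    simp only [Occ, Null, finrank_prod, finrank_self, finrank_fintype_fun_eq_card,
      finrank_pi_fintype, Fintype.card_fin, sum_const, card_univ, smul_eq_mul]
    simp only [← Nat.card_eq_fintype_card] at hsplit ⊢
    omega
  obtain ⟨d, hdker, hd0⟩ :=
    Submodule.exists_mem_ne_zero_of_ne_bot (LinearMap.ker_ne_bot_of_finrank_lt hdim)
  have hF : F d = 0 := hdker
  refine ⟨d, hd0, fun k j a h => ?_, fun k j h => ?_, ?_⟩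
  · exact congrFun (congrArg (·.2.2) hF) ⟨(⟨k, j⟩, a), not_not.mpr h⟩
  · exact congrFun (congrArg (·.1) hF) ⟨⟨k, j⟩, h⟩
  · exact congrArg (·.2.1) hF

theorem exists_ne_zero_supported_mem_constraintKernel
    (hq : ∀ k (j i : Fin (J k)) (a : Fin 2), j ≠ i → 0 ≤ q k j i a)
    (hcol : ∀ k (i : Fin (J k)) (a : Fin 2), ∑ j, q k j i a ≤ 0)
    (hx : ∀ k j a, 0 ≤ x k j a) (hbal : ∀ k j, balanceRow q k j x = 0) (hst : s ≠ t)
    (hs : ∀ a, x s.1 s.2 a ≠ 0) (ht : ∀ a, x t.1 t.2 a ≠ 0) :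
    ∃ d ∈ constraintKernel q, d ≠ 0 ∧ ∀ k j a, x k j a = 0 → d k j a = 0 := by
  obtain ⟨d, hd0, hsupp, hrow, hact⟩ :=
    exists_ne_zero_supported_balanceRow_add_classMass_eq_zero (q := q) hst hs ht
  have hclass : ∀ k, classMass k d = 0 ∧ ∀ j, balanceRow q k j d = 0 := fun k =>
    eq_zero_of_sum_eq_zero_of_add_eq_zero (fun j => ∃ a, x k j a ≠ 0)
      (sum_inflow_eq_zero_of_supported (hcol k) (hx k) (hbal k) (hsupp k))
      (hrow k)
      (fun j hj => inflow_eq_zero_of_unoccupied (hq k) (hx k) (hbal k j)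
        (fun a => not_not.mp (not_exists.mp hj a)) (hsupp k))
      (fun hk => show ∑ j, ∑ a, d k j a = 0 from sum_eq_zero fun j _ => sum_eq_zero fun a _ =>
        hsupp k j a (not_not.mp (not_exists.mp (hk j) a)))
  exact ⟨d, mem_constraintKernel.mpr ⟨fun k => (hclass k).2, fun k => (hclass k).1, hact⟩,
    hd0, hsupp⟩

end LP

theorem lp_fixed_population_exists_optimal_almost_nondegenerate_general
    {K : ℕ} {J : Fin K → ℕ}
    (lam : Fin K → ℝ) (hfixed : ∀ k, lam k = 0)
    (p : (k : Fin K) → Fin (J k) → ℝ)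
    (q : (k : Fin K) → Fin (J k) → Fin (J k) → Fin 2 → ℝ)
    (q0 : (k : Fin K) → Fin (J k) → Fin 2 → ℝ)
    (hq : ∀ k (j i : Fin (J k)) (a : Fin 2), j ≠ i → 0 ≤ q k j i a)
    (hq0 : ∀ k (i : Fin (J k)) (a : Fin 2), 0 ≤ q0 k i a)
    (hdiag : ∀ k (j : Fin (J k)) (a : Fin 2),
      q k j j a = -(q0 k j a + ∑ i ∈ univ.filter (fun i => i ≠ j), q k i j a))
    (C : (k : Fin K) → Fin (J k) → Fin 2 → ℝ)
    (α : ℝ) (xinit : Fin K → ℝ)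
    (hfeas : ∃ x, LPFeasible lam p q α xinit x) :
    ∃ xstar, LPFeasible lam p q α xinit xstar ∧
      (∀ y, LPFeasible lam p q α xinit y → LPCost C xstar ≤ LPCost C y) ∧
      (∀ s t : Σ k : Fin K, Fin (J k),
        0 < xstar s.1 s.2 0 * xstar s.1 s.2 1 →
        0 < xstar t.1 t.2 0 * xstar t.1 t.2 1 → s = t) := by
  obtain ⟨x, hxext, hxmin⟩ :=
    (isCompact_setOf_LPFeasible hfixed).exists_mem_extremePoints_isMinOn hfeas (lpCostCLM C)
  have hx : LPFeasible lam p q α xinit x := hxext.1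
  refine ⟨x, hx, fun y hy => hxmin hy, fun s t hs ht => by_contra fun hst => ?_⟩
  have hcol k i a : ∑ j, q k j i a ≤ 0 := by
    rw [sum_rate_eq_neg_of_diag (hdiag k)]
    exact neg_nonpos.mpr (hq0 k i a)
  have hmixed {u : Σ k : Fin K, Fin (J k)} (hu : 0 < x u.1 u.2 0 * x u.1 u.2 1) :
      ∀ a, x u.1 u.2 a ≠ 0 :=
    Fin.forall_fin_two.mpr ⟨left_ne_zero_of_mul hu.ne', right_ne_zero_of_mul hu.ne'⟩
  obtain ⟨d, hdker, hd0, hdsupp⟩ := exists_ne_zero_supported_mem_constraintKernel hq hcol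
    hx.2.2.2 (hx.balanceRow_eq_zero hfixed) hst (hmixed hs) (hmixed ht)
  obtain ⟨ε, hε, hadd, hsub⟩ := hx.exists_pos_add_smul_and_sub_smul hdker hdsupp
  have hεd : ε • d = 0 := eq_zero_of_add_mem_of_sub_mem_of_mem_extremePoints hxext hadd hsub
  exact hd0 ((smul_eq_zero.mp hεd).resolve_left hε.ne')

/-- For a fixed population (`λ_k = 0` for all `k`), if the feasible set of (LP) is nonempty,
then (LP) admits an optimal solution `x*` such that `x*⁰_{j,k} · x*¹_{j,k} > 0` for at most one
pair `(j,k)`. -/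
theorem lp_fixed_population_exists_optimal_almost_nondegenerate
    {K : ℕ} (hK : 1 ≤ K) {J : Fin K → ℕ} (hJ : ∀ k, 1 ≤ J k)
    (lam : Fin K → ℝ) (hfixed : ∀ k, lam k = 0)
    (p : (k : Fin K) → Fin (J k) → ℝ)
    (hp : ∀ k j, 0 ≤ p k j) (hpsum : ∀ k, ∑ j, p k j = 1)
    (q : (k : Fin K) → Fin (J k) → Fin (J k) → Fin 2 → ℝ)
    (q0 : (k : Fin K) → Fin (J k) → Fin 2 → ℝ)
    (hq : ∀ k (j i : Fin (J k)) (a : Fin 2), j ≠ i → 0 ≤ q k j i a)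
    (hq0 : ∀ k (i : Fin (J k)) (a : Fin 2), 0 ≤ q0 k i a)
    (hdiag : ∀ k (j : Fin (J k)) (a : Fin 2),
      q k j j a = -(q0 k j a + ∑ i ∈ univ.filter (fun i => i ≠ j), q k i j a))
    (C : (k : Fin K) → Fin (J k) → Fin 2 → ℝ)
    (α : ℝ) (hα : 0 < α)
    (xinit : Fin K → ℝ) (hxinit : ∀ k, 0 ≤ xinit k)
    (hfeas : ∃ x, LPFeasible lam p q α xinit x) :
    ∃ xstar, LPFeasible lam p q α xinit xstar ∧
      (∀ y, LPFeasible lam p q α xinit y → LPCost C xstar ≤ LPCost C y) ∧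
      (∀ s t : Σ k : Fin K, Fin (J k),
        0 < xstar s.1 s.2 0 * xstar s.1 s.2 1 →
        0 < xstar t.1 t.2 0 * xstar t.1 t.2 1 → s = t) :=
  lp_fixed_population_exists_optimal_almost_nondegenerate_general lam hfixed p q q0 hq hq0 hdiag C α
    xinit hfeas
end

section
/- Assume the classes are ordered so that ι_1 ≥ ι_2 ≥ ⋯ ≥ ι_K, where ι_k := (c_k + d_k θ_k)(μ_k + θ̃_k)/θ_k − c̃_k − d̃_k θ̃_k. Let l̂ := min{ l : ι_l ≤ 0 } (with l̂ := K+1 if all ι_l > 0), set b_k := λ_k/(μ_k + θ̃_k), and let k̂ := max{ k ∈ {0,1,…,l̂−1} : Σ_{l=1}^{k} b_l ≤ S }. Define x* by: x*^0_k = 0 and x*^1_k = b_k for k = 1,…,k̂; if k̂+1 < l̂, x*^1_{k̂+1} = S − Σ_{l=1}^{k̂} b_l and x*^0_{k̂+1} = (λ_{k̂+1} − (μ_{k̂+1} + θ̃_{k̂+1}) x*^1_{k̂+1})/θ_{k̂+1}; and x*^0_k = λ_k/θ_k, x*^1_k = 0 for all k ≥ min(k̂+2, l̂). Then x* is an optimal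 solution of the M/M/S+M LP. -/
open Finset

/-- Feasibility for the multi-class M/M/S+M LP. -/
def MMSMFeasible {K : ℕ} (lam mu th tht : Fin K → ℝ) (S : ℝ)
    (x0 x1 : Fin K → ℝ) : Prop :=
  (∀ k, 0 = lam k - mu k * x1 k - th k * x0 k - tht k * x1 k) ∧
  (∑ k, x1 k ≤ S) ∧ (∀ k, 0 ≤ x0 k) ∧ (∀ k, 0 ≤ x1 k)

/-- The objective of the multi-class M/M/S+M LP. -/
def MMSMCost {K : ℕ} (th tht c ct d dt : Fin K → ℝ) (x0 x1 : Fin K → ℝ) : ℝ :=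
  ∑ k, (c k * x0 k + ct k * x1 k + d k * th k * x0 k + dt k * tht k * x1 k)

/-!
The balance equations determine `x⁰` from `x¹`, which turns the LP into a fractional knapsack
problem in `x¹`: maximise `∑ ι_k x¹_k` subject to `0 ≤ x¹_k ≤ b_k` and `∑ x¹_k ≤ S`.
The greedy point fills the classes in decreasing order of `ι` while `ι` is positive and capacity
remains. It has a threshold `τ ≥ 0` (`ι_k̂` if the capacity binds, `0` otherwise) such that classes
above `τ` are full and classes below `τ` are empty, and any such point is optimal because
`∑ ι (x - y) = ∑ (ι - τ)(x - y) + τ (∑ x - ∑ y)` with both terms nonnegative.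
-/

theorem sum_mul_le_sum_mul_of_threshold {ι : Type*} [Fintype ι] {v x y u : ι → ℝ} {S τ : ℝ}
    (hτ : 0 ≤ τ) (hx : ∀ i, (τ < v i → x i = u i) ∧ (v i < τ → x i = 0))
    (hxS : τ = 0 ∨ ∑ i, x i = S) (hy0 : ∀ i, 0 ≤ y i) (hyu : ∀ i, y i ≤ u i)
    (hyS : ∑ i, y i ≤ S) :
    ∑ i, v i * y i ≤ ∑ i, v i * x i := by
  have hterm : ∀ i, 0 ≤ (v i - τ) * (x i - y i) := fun i => by
    rcases lt_trichotomy τ (v i) with h | h | h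
    · rw [(hx i).1 h]
      exact mul_nonneg (by linarith) (by linarith [hyu i])
    · simp [← h]
    · rw [(hx i).2 h]
      exact mul_nonneg_of_nonpos_of_nonpos (by linarith) (by linarith [hy0 i])
  have hcap : 0 ≤ τ * (∑ i, x i - ∑ i, y i) := by
    rcases hxS with rfl | h
    · simp
    · rw [h]
      exact mul_nonneg hτ (by linarith)
  have hsplit : ∑ i, v i * x i - ∑ i, v i * y i =
      ∑ i, (v i - τ) * (x i - y i) + τ * (∑ i, x i - ∑ i, y i) := by
    simp only [mul_sub, sub_mul, Finset.sum_sub_distrib, Finset.mul_sum]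
    ring
  linarith [Finset.sum_nonneg fun i (_ : i ∈ univ) => hterm i]

section LP

variable {K : ℕ} {lam mu th tht : Fin K → ℝ} {S : ℝ} {x0 x1 : Fin K → ℝ}

theorem mmsmFeasible_iff (hth : ∀ k, 0 < th k) (hmt : ∀ k, 0 < mu k + tht k) :
    MMSMFeasible lam mu th tht S x0 x1 ↔
      (∀ k, x0 k = (lam k - (mu k + tht k) * x1 k) / th k) ∧ ∑ k, x1 k ≤ S ∧
        ∀ k, 0 ≤ x1 k ∧ x1 k ≤ lam k / (mu k + tht k) := by
  have hbal : ∀ k, 0 = lam k - mu k * x1 k - th k * x0 k - tht k * x1 k ↔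
      x0 k = (lam k - (mu k + tht k) * x1 k) / th k := fun k => by
    rw [eq_div_iff (hth k).ne']
    constructor <;> intro h <;> linarith
  have hx0_nonneg : (∀ k, x0 k = (lam k - (mu k + tht k) * x1 k) / th k) →
      ∀ k, (0 ≤ x0 k ↔ x1 k ≤ lam k / (mu k + tht k)) := fun hx0 k => by
    rw [hx0, le_div_iff₀ (hth k), le_div_iff₀ (hmt k)]
    constructor <;> intro h <;> linarith
  constructor
  · rintro ⟨hb, hS, h0, h1⟩
    have hx0 k := (hbal k).1 (hb k)
    exact ⟨hx0, hS, fun k => ⟨h1 k, (hx0_nonneg hx0 k).1 (h0 k)⟩⟩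
  · rintro ⟨hx0, hS, h1⟩
    exact ⟨fun k => (hbal k).2 (hx0 k), hS, fun k => (hx0_nonneg hx0 k).2 (h1 k).2,
      fun k => (h1 k).1⟩

theorem mmsmCost_eq {c ct d dt iota : Fin K → ℝ} (hth : ∀ k, th k ≠ 0)
    (hiota : ∀ k, iota k = (c k + d k * th k) * (mu k + tht k) / th k - ct k - dt k * tht k)
    (hx0 : ∀ k, x0 k = (lam k - (mu k + tht k) * x1 k) / th k) :
    MMSMCost th tht c ct d dt x0 x1 =
      ∑ k, (c k + d k * th k) * lam k / th k - ∑ k, iota k * x1 k := by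
  rw [MMSMCost, ← Finset.sum_sub_distrib]
  refine Finset.sum_congr rfl fun k _ => ?_
  have := hth k
  rw [hx0, hiota]
  field_simp
  ring

end LP

section Greedy

variable {K : ℕ}

/-- The paper's `l̂ - 1` (classes are `0`-indexed). -/
noncomputable def firstNonposIndex (iota : Fin K → ℝ) : ℕ :=
  sInf ({n : ℕ | ∃ hn : n < K, iota ⟨n, hn⟩ ≤ 0} ∪ {K})

theorem firstNonposIndex_le (iota : Fin K → ℝ) : firstNonposIndex iota ≤ K :=
  Nat.sInf_le (Or.inr rfl)

theorem val_lt_firstNonposIndex_iff {iota : Fin K → ℝ} (hmono : Antitone iota) (k : Fin K) :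
    k.val < firstNonposIndex iota ↔ 0 < iota k := by
  constructor
  · intro hk
    by_contra! h
    exact (Nat.sInf_le (Or.inl ⟨k.isLt, h⟩)).not_gt hk
  · intro hpos
    by_contra! hk
    rcases Nat.sInf_mem (⟨K, Or.inr rfl⟩ :
        ({n : ℕ | ∃ hn : n < K, iota ⟨n, hn⟩ ≤ 0} ∪ {K}).Nonempty) with ⟨hn, hle⟩ | hK
    · linarith [hmono (show (⟨_, hn⟩ : Fin K) ≤ k from hk)]
    · exact absurd k.isLt (by rw [firstNonposIndex, hK] at hk; omega)

def prefixSum (b : Fin K → ℝ) (m : ℕ) : ℝ :=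
  ∑ l ∈ univ.filter (fun l : Fin K => l.val < m), b l

theorem prefixSum_succ (b : Fin K → ℝ) (k : Fin K) :
    prefixSum b (k.val + 1) = prefixSum b k.val + b k := by
  have hset : univ.filter (fun l : Fin K => l.val < k.val + 1) =
      insert k (univ.filter (fun l : Fin K => l.val < k.val)) := by
    ext l
    simp only [mem_filter, mem_univ, true_and, mem_insert, Fin.ext_iff]
    omega
  rw [prefixSum, prefixSum, hset, sum_insert (by simp), add_comm]

/-- The paper's `k̂`. -/
noncomputable def greedyCount (b : Fin K → ℝ) (S : ℝ) (lh : ℕ) : ℕ :=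
  sSup {m : ℕ | m ≤ lh ∧ prefixSum b m ≤ S}

theorem greedyCount_le (b : Fin K → ℝ) (S : ℝ) (lh : ℕ) : greedyCount b S lh ≤ lh :=
  csSup_le' fun _ hm => hm.1

theorem prefixSum_greedyCount_le (b : Fin K → ℝ) {S : ℝ} (hS : 0 ≤ S) (lh : ℕ) :
    prefixSum b (greedyCount b S lh) ≤ S :=
  (Nat.sSup_mem (s := {m : ℕ | m ≤ lh ∧ prefixSum b m ≤ S})
    ⟨0, Nat.zero_le _, by simpa [prefixSum] using hS⟩ ⟨lh, fun _ hm => hm.1⟩).2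

theorem lt_prefixSum_succ_greedyCount (b : Fin K → ℝ) (S : ℝ) {lh : ℕ}
    (h : greedyCount b S lh < lh) : S < prefixSum b (greedyCount b S lh + 1) := by
  by_contra! hle
  have := le_csSup (⟨lh, fun _ hm => hm.1⟩ : BddAbove {m : ℕ | m ≤ lh ∧ prefixSum b m ≤ S})
    ⟨h, hle⟩
  exact (Nat.lt_succ_self _).not_ge this

/-- The paper's `x*¹`. -/
noncomputable def greedyLoad (b : Fin K → ℝ) (S : ℝ) (lh kh : ℕ) (k : Fin K) : ℝ :=
  if k.val < kh then b k
  else if k.val = kh ∧ kh < lh then S - prefixSum b kh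
  else 0

variable {b : Fin K → ℝ} {S : ℝ} {lh kh : ℕ}

theorem sum_greedyLoad_of_lt (hkK : kh < K) (hlt : kh < lh) :
    ∑ k, greedyLoad b S lh kh k = S := by
  rw [← sum_filter_add_sum_filter_not univ (fun k : Fin K => k.val < kh)]
  have hfull : ∑ k ∈ univ.filter (fun k : Fin K => k.val < kh), greedyLoad b S lh kh k =
      prefixSum b kh :=
    sum_congr rfl fun k hk => if_pos (mem_filter.1 hk).2
  have hrest : ∑ k ∈ univ.filter (fun k : Fin K => ¬ k.val < kh), greedyLoad b S lh kh k =
      S - prefixSum b kh := by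
    rw [sum_eq_single_of_mem (⟨kh, hkK⟩ : Fin K) (by simp)]
    · simp [greedyLoad, hlt]
    · intro k hk hne
      have hne' : k.val ≠ kh := fun h => hne (Fin.ext h)
      simp_all [greedyLoad]
  rw [hfull, hrest]
  ring

theorem sum_greedyLoad_of_not_lt (h : ¬ kh < lh) :
    ∑ k, greedyLoad b S lh kh k = prefixSum b kh := by
  simp [greedyLoad, h, prefixSum, sum_filter]

theorem sum_greedyLoad_le (hlhK : lh ≤ K) (hP : prefixSum b kh ≤ S) :
    ∑ k, greedyLoad b S lh kh k ≤ S := by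
  by_cases h : kh < lh
  · exact (sum_greedyLoad_of_lt (h.trans_le hlhK) h).le
  · rw [sum_greedyLoad_of_not_lt h]
    exact hP

theorem greedyLoad_mem_Icc (hb : ∀ k, 0 ≤ b k) (hP : prefixSum b kh ≤ S)
    (hnext : kh < lh → S < prefixSum b (kh + 1)) (k : Fin K) :
    greedyLoad b S lh kh k ∈ Set.Icc 0 (b k) := by
  unfold greedyLoad
  split_ifs with h1 h2
  · exact ⟨hb k, le_rfl⟩
  · have hsucc := prefixSum_succ b k
    rw [h2.1] at hsucc
    have := hnext h2.2
    constructor <;> linarith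
  · exact ⟨le_rfl, hb k⟩

theorem exists_threshold_greedyLoad {iota : Fin K → ℝ} (hmono : Antitone iota)
    (hcut : ∀ k : Fin K, k.val < lh ↔ 0 < iota k) (hlhK : lh ≤ K) (hkh : kh ≤ lh) :
    ∃ τ, 0 ≤ τ ∧
      (∀ k, (τ < iota k → greedyLoad b S lh kh k = b k) ∧
        (iota k < τ → greedyLoad b S lh kh k = 0)) ∧
      (τ = 0 ∨ ∑ k, greedyLoad b S lh kh k = S) := by
  rcases hkh.lt_or_eq with hlt | rfl
  · have hkK : kh < K := hlt.trans_le hlhK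
    refine ⟨iota ⟨kh, hkK⟩, ((hcut _).1 hlt).le, fun k => ⟨fun h => ?_, fun h => ?_⟩,
      Or.inr (sum_greedyLoad_of_lt hkK hlt)⟩
    · have hk : k.val < kh := by
        by_contra! hk
        exact h.not_ge (hmono (show (⟨kh, hkK⟩ : Fin K) ≤ k from hk))
      simp [greedyLoad, hk]
    · have hk : kh < k.val := by
        by_contra! hk
        exact h.not_ge (hmono (show k ≤ (⟨kh, hkK⟩ : Fin K) from hk))
      simp [greedyLoad, hk.not_gt, hk.ne']
  · refine ⟨0, le_rfl, fun k => ⟨fun h => ?_, fun h => ?_⟩, Or.inl rfl⟩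
    · simp [greedyLoad, (hcut k).2 h]
    · simp [greedyLoad, (hcut k).not.2 h.not_gt]

end Greedy

theorem mmsm_greedy_point_optimal_general
    {K : ℕ}
    (lam mu th tht c ct d dt : Fin K → ℝ) (S : ℝ)
    (hlam : ∀ k, 0 < lam k) (hmu : ∀ k, 0 < mu k) (hth : ∀ k, 0 < th k)
    (htht : ∀ k, 0 ≤ tht k) (hS : 0 < S)
    (iota : Fin K → ℝ)
    (hiota : ∀ k, iota k = (c k + d k * th k) * (mu k + tht k) / th k - ct k - dt k * tht k)
    (hmono : ∀ k l : Fin K, k ≤ l → iota l ≤ iota k)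
    (b : Fin K → ℝ) (hb : ∀ k, b k = lam k / (mu k + tht k))
    (lh : ℕ) (hlh : lh = sInf ({n : ℕ | ∃ hn : n < K, iota ⟨n, hn⟩ ≤ 0} ∪ {K}))
    (kh : ℕ) (hkh : kh = sSup {m : ℕ | m ≤ lh ∧
      ∑ l ∈ univ.filter (fun l : Fin K => l.val < m), b l ≤ S})
    (x0s x1s : Fin K → ℝ)
    (hx1 : ∀ k : Fin K, x1s k =
      if k.val < kh then b k
      else if k.val = kh ∧ kh < lh then
        S - ∑ l ∈ univ.filter (fun l : Fin K => l.val < kh), b l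
      else 0)
    (hx0 : ∀ k : Fin K, x0s k =
      if k.val < kh then 0
      else if k.val = kh ∧ kh < lh then
        (lam k - (mu k + tht k) *
          (S - ∑ l ∈ univ.filter (fun l : Fin K => l.val < kh), b l)) / th k
      else lam k / th k) :
    MMSMFeasible lam mu th tht S x0s x1s ∧
    (∀ y0 y1 : Fin K → ℝ, MMSMFeasible lam mu th tht S y0 y1 →
      MMSMCost th tht c ct d dt x0s x1s ≤ MMSMCost th tht c ct d dt y0 y1) := by
  obtain rfl : lh = firstNonposIndex iota := hlh
  obtain rfl : kh = greedyCount b S (firstNonposIndex iota) := hkh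
  have hmt k : 0 < mu k + tht k := add_pos_of_pos_of_nonneg (hmu k) (htht k)
  have hP := prefixSum_greedyCount_le b hS.le (firstNonposIndex iota)
  have hx1s : x1s = greedyLoad b S _ _ := funext hx1
  have hx0s k : x0s k = (lam k - (mu k + tht k) * x1s k) / th k := by
    rw [hx0, hx1]
    split_ifs
    · rw [hb, mul_div_cancel₀ _ (hmt k).ne', sub_self, zero_div]
    · rfl
    · rw [mul_zero, sub_zero]
  have hbnd k := hx1s ▸ greedyLoad_mem_Icc (fun k => hb k ▸ (div_pos (hlam k) (hmt k)).le) hP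
    (lt_prefixSum_succ_greedyCount b S) k
  have hfeas : MMSMFeasible lam mu th tht S x0s x1s := (mmsmFeasible_iff hth hmt).2
    ⟨hx0s, hx1s ▸ sum_greedyLoad_le (firstNonposIndex_le iota) hP, fun k => hb k ▸ hbnd k⟩
  refine ⟨hfeas, fun y0 y1 hy => ?_⟩
  obtain ⟨hy0, hyS, hy1⟩ := (mmsmFeasible_iff hth hmt).1 hy
  rw [mmsmCost_eq (fun k => (hth k).ne') hiota hy0, mmsmCost_eq (fun k => (hth k).ne') hiota hx0s]
  obtain ⟨τ, hτ, hthr, hcap⟩ := exists_threshold_greedyLoad (b := b) (S := S) hmono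
    (val_lt_firstNonposIndex_iff hmono) (firstNonposIndex_le iota) (greedyCount_le b S _)
  have := sum_mul_le_sum_mul_of_threshold hτ (hx1s ▸ hthr) (hx1s ▸ hcap) (fun k => (hy1 k).1)
    (fun k => hb k ▸ (hy1 k).2) hyS
  linarith

/-- The greedy point `x*` determined by the indices `ι_k` (classes are `0`-indexed: the `0`-based
cutoff `lh` equals `l̂ − 1` and `kh` equals `k̂` of the paper) is an optimal solution of the
M/M/S+M LP. -/
theorem mmsm_greedy_point_optimal
    {K : ℕ} (hK : 1 ≤ K)
    (lam mu th tht c ct d dt : Fin K → ℝ) (S : ℝ)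
    (hlam : ∀ k, 0 < lam k) (hmu : ∀ k, 0 < mu k) (hth : ∀ k, 0 < th k)
    (htht : ∀ k, 0 ≤ tht k) (hS : 0 < S)
    (iota : Fin K → ℝ)
    (hiota : ∀ k, iota k = (c k + d k * th k) * (mu k + tht k) / th k - ct k - dt k * tht k)
    (hmono : ∀ k l : Fin K, k ≤ l → iota l ≤ iota k)
    (b : Fin K → ℝ) (hb : ∀ k, b k = lam k / (mu k + tht k))
    (lh : ℕ) (hlh : lh = sInf ({n : ℕ | ∃ hn : n < K, iota ⟨n, hn⟩ ≤ 0} ∪ {K}))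
    (kh : ℕ) (hkh : kh = sSup {m : ℕ | m ≤ lh ∧
      ∑ l ∈ univ.filter (fun l : Fin K => l.val < m), b l ≤ S})
    (x0s x1s : Fin K → ℝ)
    (hx1 : ∀ k : Fin K, x1s k =
      if k.val < kh then b k
      else if k.val = kh ∧ kh < lh then
        S - ∑ l ∈ univ.filter (fun l : Fin K => l.val < kh), b l
      else 0)
    (hx0 : ∀ k : Fin K, x0s k =
      if k.val < kh then 0
      else if k.val = kh ∧ kh < lh then
        (lam k - (mu k + tht k) *
          (S - ∑ l ∈ univ.filter (fun l : Fin K => l.val < kh), b l)) / th k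
      else lam k / th k) :
    MMSMFeasible lam mu th tht S x0s x1s ∧
    (∀ y0 y1 : Fin K → ℝ, MMSMFeasible lam mu th tht S y0 y1 →
      MMSMCost th tht c ct d dt x0s x1s ≤ MMSMCost th tht c ct d dt y0 y1) :=
  mmsm_greedy_point_optimal_general lam mu th tht c ct d dt S hlam hmu hth htht hS iota hiota hmono
    b hb lh hlh kh hkh x0s x1s hx1 hx0
end

section
/- Assume the classes are ordered so that ι_1 ≥ ι_2 ≥ ⋯ ≥ ι_K. Set b_k := λ_k/(μ_k + θ̃_k) and k̂ := max{ k ∈ {0,1,…,l̂−1} : Σ_{l=1}^{k} b_l ≤ S }. Define x* by: x*^0_k = 0 and x*^1_k = b_k for k = 1,…,k̂; if k̂+1 < l̂, x*^1_{k̂+1} = S − Σ_{l=1}^{k̂} b_l and x*^0_{k̂+1} = (λ_{k̂+1} − (μ_{k̂+1} + θ̃_{k̂+1}) x*^1_{k̂+1})/θ_{k̂+1}; and x*^0_k = λ_k/θ_k, x*^1_k = 0 for all k ≥ min(k̂+2, l̂). Then x* is an equilibrium point of the priority fluid dynamics: x*^0_k ≥ 0 and x*^1_k ≥ 0 for all k,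 λ_k = (μ_k + θ̃_k) x*^1_k + θ_k x*^0_k for all k, x*^1_k = min( max(0, S − Σ_{l=1}^{k−1} (x*^0_l + x*^1_l)), x*^0_k + x*^1_k ) for all k < l̂, and x*^1_k = 0 for all k ≥ l̂. -/
open Finset

/-- Partial sum of `b` over classes of index `< m`. -/
def Bsum {K : ℕ} (b : Fin K → ℝ) (m : ℕ) : ℝ :=
  ∑ l ∈ univ.filter (fun l : Fin K => l.val < m), b l

/-- The greedy point `x*` determined by the indices `ι_k` is an equilibrium point of the fluid
dynamics of the multi-class M/M/S+M model under the index priority policy `ι` (classes are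
`0`-indexed: the `0`-based cutoff `lh` equals `l̂ − 1` and `kh` equals `k̂` of the paper). -/
theorem mmsm_greedy_point_is_equilibrium
    {K : ℕ} (hK : 1 ≤ K)
    (lam mu th tht c ct d dt : Fin K → ℝ) (S : ℝ)
    (hlam : ∀ k, 0 < lam k) (hmu : ∀ k, 0 < mu k) (hth : ∀ k, 0 < th k)
    (htht : ∀ k, 0 ≤ tht k) (hS : 0 < S)
    (iota : Fin K → ℝ)
    (hiota : ∀ k, iota k = (c k + d k * th k) * (mu k + tht k) / th k - ct k - dt k * tht k)
    (hmono : ∀ k l : Fin K, k ≤ l → iota l ≤ iota k)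
    (b : Fin K → ℝ) (hb : ∀ k, b k = lam k / (mu k + tht k))
    (lh : ℕ) (hlh : lh = sInf ({n : ℕ | ∃ hn : n < K, iota ⟨n, hn⟩ ≤ 0} ∪ {K}))
    (kh : ℕ) (hkh : kh = sSup {m : ℕ | m ≤ lh ∧
      ∑ l ∈ univ.filter (fun l : Fin K => l.val < m), b l ≤ S})
    (x0s x1s : Fin K → ℝ)
    (hx1 : ∀ k : Fin K, x1s k =
      if k.val < kh then b k
      else if k.val = kh ∧ kh < lh then
        S - ∑ l ∈ univ.filter (fun l : Fin K => l.val < kh), b l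
      else 0)
    (hx0 : ∀ k : Fin K, x0s k =
      if k.val < kh then 0
      else if k.val = kh ∧ kh < lh then
        (lam k - (mu k + tht k) *
          (S - ∑ l ∈ univ.filter (fun l : Fin K => l.val < kh), b l)) / th k
      else lam k / th k) :
    (∀ k, 0 ≤ x0s k) ∧ (∀ k, 0 ≤ x1s k) ∧
    (∀ k, lam k = (mu k + tht k) * x1s k + th k * x0s k) ∧
    (∀ k : Fin K, k.val < lh →
      x1s k = min (max 0 (S - ∑ l ∈ Finset.Iio k, (x0s l + x1s l))) (x0s k + x1s k)) ∧
    (∀ k : Fin K, lh ≤ k.val → x1s k = 0) := by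
  have hmt : ∀ k, 0 < mu k + tht k := fun k => by have := hmu k; have := htht k; linarith
  have hbpos : ∀ k, 0 < b k := fun k => by rw [hb]; exact div_pos (hlam k) (hmt k)
  -- rephrase hypotheses with `Bsum`
  have hkh' : kh = sSup {m : ℕ | m ≤ lh ∧ Bsum b m ≤ S} := hkh
  have hx1' : ∀ k : Fin K, x1s k =
      if k.val < kh then b k
      else if k.val = kh ∧ kh < lh then S - Bsum b kh
      else 0 := hx1
  have hx0' : ∀ k : Fin K, x0s k =
      if k.val < kh then 0
      else if k.val = kh ∧ kh < lh then
        (lam k - (mu k + tht k) * (S - Bsum b kh)) / th k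
      else lam k / th k := hx0
  clear hx1 hx0 hkh
  -- basic facts about Bsum
  have hsplit : ∀ (f : Fin K → ℝ) (m : ℕ) (hm : m < K),
      ∑ l ∈ univ.filter (fun l : Fin K => l.val < m + 1), f l
        = (∑ l ∈ univ.filter (fun l : Fin K => l.val < m), f l) + f ⟨m, hm⟩ := by
    intro f m hm
    have hins : (univ.filter (fun l : Fin K => l.val < m + 1)) =
        insert ⟨m, hm⟩ (univ.filter (fun l : Fin K => l.val < m)) := by
      ext l
      simp only [mem_filter, mem_univ, true_and, mem_insert, Fin.ext_iff]
      omega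
    rw [hins, Finset.sum_insert (by simp)]
    ring
  have hBmono : ∀ m n : ℕ, m ≤ n → Bsum b m ≤ Bsum b n := by
    intro m n hmn
    apply Finset.sum_le_sum_of_subset_of_nonneg
    · intro l hl
      simp only [mem_filter, mem_univ, true_and] at hl ⊢
      omega
    · intro l _ _
      exact (hbpos l).le
  have hB0 : Bsum b 0 = 0 := by simp [Bsum]
  -- facts about kh
  have hbdd : BddAbove {m : ℕ | m ≤ lh ∧ Bsum b m ≤ S} := ⟨lh, fun m hm => hm.1⟩
  have h0M : (0 : ℕ) ∈ {m : ℕ | m ≤ lh ∧ Bsum b m ≤ S} := ⟨Nat.zero_le _, by rw [hB0]; linarith⟩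
  have hkhM : kh ∈ {m : ℕ | m ≤ lh ∧ Bsum b m ≤ S} := by
    rw [hkh']; exact Nat.sSup_mem ⟨0, h0M⟩ hbdd
  have hkh_le : kh ≤ lh := hkhM.1
  have hBkh : Bsum b kh ≤ S := hkhM.2
  have hlhK : lh ≤ K := by
    rw [hlh]; exact Nat.sInf_le (Set.mem_union_right _ rfl)
  have hnext : kh < lh → S < Bsum b (kh + 1) := by
    intro hkl
    by_contra h
    push_neg at h
    have hmem : kh + 1 ∈ {m : ℕ | m ≤ lh ∧ Bsum b m ≤ S} := ⟨hkl, h⟩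
    have := le_csSup hbdd hmem
    rw [← hkh'] at this
    omega
  -- numerator positivity at class kh (when kh < lh)
  have hnum : ∀ (k : Fin K), k.val = kh → kh < lh →
      0 < lam k - (mu k + tht k) * (S - Bsum b kh) := by
    intro k hkkh hkl
    have hkhK : kh < K := lt_of_lt_of_le hkl hlhK
    have hkeq : (⟨kh, hkhK⟩ : Fin K) = k := by
      apply Fin.ext; simp [hkkh]
    have hBs : Bsum b (kh + 1) = Bsum b kh + b ⟨kh, hkhK⟩ := hsplit b kh hkhK
    rw [hkeq] at hBs
    have h1 : S < Bsum b kh + b k := by rw [← hBs]; exact hnext hkl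
    have hlamk : lam k = b k * (mu k + tht k) := by
      rw [hb, div_mul_cancel₀ _ (hmt k).ne']
    have hbk : S - Bsum b kh < b k := by linarith
    nlinarith [hmt k]
  -- part 1 : 0 ≤ x0s
  have h0 : ∀ k, 0 ≤ x0s k := by
    intro k
    rw [hx0']
    split_ifs with h1 h2
    · exact le_refl 0
    · exact div_nonneg (le_of_lt (hnum k h2.1 h2.2)) (hth k).le
    · exact div_nonneg (hlam k).le (hth k).le
  -- part 2 : 0 ≤ x1s
  have h1 : ∀ k, 0 ≤ x1s k := by
    intro k
    rw [hx1']
    split_ifs with ha hb2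
    · exact (hbpos k).le
    · linarith
    · exact le_refl 0
  -- part 3 : balance
  have h3 : ∀ k, lam k = (mu k + tht k) * x1s k + th k * x0s k := by
    intro k
    rw [hx1' k, hx0' k]
    split_ifs with ha hb2
    · rw [hb, mul_div_cancel₀ _ (hmt k).ne']
      ring
    · rw [mul_comm (th k), div_mul_cancel₀ _ (hth k).ne']
      ring
    · rw [mul_comm (th k), div_mul_cancel₀ _ (hth k).ne']
      ring
  -- Iio as a filter
  have hIio : ∀ k : Fin K, Finset.Iio k = univ.filter (fun l : Fin K => l.val < k.val) := by
    intro k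
    ext l
    simp only [Finset.mem_Iio, mem_filter, mem_univ, true_and, Fin.lt_def]
  -- sum identity when k.val ≤ kh
  have hsumA : ∀ k : Fin K, k.val ≤ kh →
      ∑ l ∈ Finset.Iio k, (x0s l + x1s l) = Bsum b k.val := by
    intro k hk
    rw [hIio]
    unfold Bsum
    apply Finset.sum_congr rfl
    intro l hl
    simp only [mem_filter, mem_univ, true_and] at hl
    have hlkh : l.val < kh := lt_of_lt_of_le hl hk
    rw [hx0' l, hx1' l, if_pos hlkh, if_pos hlkh]
    ring
  -- part 4
  have h4 : ∀ k : Fin K, k.val < lh →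
      x1s k = min (max 0 (S - ∑ l ∈ Finset.Iio k, (x0s l + x1s l))) (x0s k + x1s k) := by
    intro k hklh
    rcases lt_trichotomy k.val kh with hA | hB | hC
    · -- k.val < kh
      have hx1k : x1s k = b k := by rw [hx1', if_pos hA]
      have hx0k : x0s k = 0 := by rw [hx0', if_pos hA]
      have hsum := hsumA k hA.le
      have hstep : Bsum b (k.val + 1) = Bsum b k.val + b k := by
        have := hsplit b k.val k.isLt
        have hkeq : (⟨k.val, k.isLt⟩ : Fin K) = k := by apply Fin.ext; simp
        rw [hkeq] at this
        exact this
      have hle : Bsum b (k.val + 1) ≤ Bsum b kh := hBmono _ _ (by omega)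
      have hbk : b k ≤ S - Bsum b k.val := by linarith
      rw [hsum, hx1k, hx0k]
      rw [max_eq_right (by linarith [hbpos k]), min_eq_right (by linarith)]
      ring
    · -- k.val = kh, kh < lh
      have hkl : kh < lh := hB ▸ hklh
      have hx1k : x1s k = S - Bsum b kh := by
        rw [hx1', if_neg (by omega), if_pos ⟨hB, hkl⟩]
      have hsum := hsumA k hB.le
      have hx0k : 0 ≤ x0s k := h0 k
      rw [hsum, hB, hx1k]
      rw [max_eq_right (by linarith), min_eq_left (by linarith)]
    · -- kh < k.val < lh
      have hkl : kh < lh := lt_trans hC hklh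
      have hkhK : kh < K := lt_trans hC k.isLt
      have hx1k : x1s k = 0 := by
        rw [hx1', if_neg (by omega), if_neg (by omega)]
      -- lower bound for the sum
      have hlow : S ≤ ∑ l ∈ Finset.Iio k, (x0s l + x1s l) := by
        have hsub : (univ.filter (fun l : Fin K => l.val < kh + 1)) ⊆ Finset.Iio k := by
          intro l hl
          rw [hIio]
          simp only [mem_filter, mem_univ, true_and] at hl ⊢
          omega
        have hstep1 : ∑ l ∈ univ.filter (fun l : Fin K => l.val < kh + 1), (x0s l + x1s l)
            ≤ ∑ l ∈ Finset.Iio k, (x0s l + x1s l) := by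
          apply Finset.sum_le_sum_of_subset_of_nonneg hsub
          intro l _ _
          have := h0 l; have := h1 l; linarith
        have hstep2 : ∑ l ∈ univ.filter (fun l : Fin K => l.val < kh + 1), (x0s l + x1s l)
            = (∑ l ∈ univ.filter (fun l : Fin K => l.val < kh), (x0s l + x1s l))
              + (x0s ⟨kh, hkhK⟩ + x1s ⟨kh, hkhK⟩) :=
          hsplit (fun l => x0s l + x1s l) kh hkhK
        have hstep3 : ∑ l ∈ univ.filter (fun l : Fin K => l.val < kh), (x0s l + x1s l)
            = Bsum b kh := by
          rw [Bsum]
          apply Finset.sum_congr rfl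
          intro l hl
          simp only [mem_filter, mem_univ, true_and] at hl
          rw [hx0' l, hx1' l, if_pos hl, if_pos hl]
          ring
        have hx1kh : x1s ⟨kh, hkhK⟩ = S - Bsum b kh := by
          rw [hx1', if_neg (by simp), if_pos ⟨rfl, hkl⟩]
        have hx0kh : 0 ≤ x0s ⟨kh, hkhK⟩ := h0 _
        rw [hstep2, hstep3, hx1kh] at hstep1
        linarith
      have hx0k : 0 ≤ x0s k := h0 k
      rw [hx1k]
      rw [max_eq_left (by linarith), min_eq_left (by linarith)]
  -- part 5
  have h5 : ∀ k : Fin K, lh ≤ k.val → x1s k = 0 := by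
    intro k hk
    rw [hx1', if_neg (by omega), if_neg (by rintro ⟨h1, h2⟩; omega)]
  exact ⟨h0, h1, h3, h4, h5⟩
end

section
/- Assume the classes are ordered so that ι_1 ≥ ι_2 ≥ ⋯ ≥ ι_K. The fluid dynamics of the multi-class M/M/S+M model under the index priority policy ι has a unique equilibrium point: if (x^0, x^1) and (y^0, y^1) are both pairs of nonnegative vectors in ℝ^K satisfying λ_k = (μ_k + θ̃_k) x^1_k + θ_k x^0_k for all k, x^1_k = min( max(0, S − Σ_{l=1}^{k−1} (x^0_l + x^1_l)), x^0_k + x^1_k ) for all k < l̂, and x^1_k = 0 for all k ≥ l̂ (and identically for (y^0, y^1)), then x^0 = y^0 and x^1 = y^1. -/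
open Finset

/-- `(x⁰, x¹)` is an equilibrium point of the fluid dynamics of the multi-class M/M/S+M model
under the priority policy serving the (`0`-indexed) classes `0, …, lh − 1` in this order and
never serving classes `≥ lh`. -/
def MMSMEquilibrium {K : ℕ} (lam mu th tht : Fin K → ℝ) (S : ℝ) (lh : ℕ)
    (x0 x1 : Fin K → ℝ) : Prop :=
  (∀ k, 0 ≤ x0 k) ∧ (∀ k, 0 ≤ x1 k) ∧
  (∀ k, lam k = (mu k + tht k) * x1 k + th k * x0 k) ∧
  (∀ k : Fin K, k.val < lh →
    x1 k = min (max 0 (S - ∑ l ∈ Finset.Iio k, (x0 l + x1 l))) (x0 k + x1 k)) ∧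
  (∀ k : Fin K, lh ≤ k.val → x1 k = 0)


lemma key_min (lam mu th tht R x0 x1 : ℝ) (hpos : 0 < mu + tht)
    (hth : 0 < th) (hx0 : 0 ≤ x0) (heq : lam = (mu + tht) * x1 + th * x0)
    (hmin : x1 = min R (x0 + x1)) : x1 = min R (lam / (mu + tht)) := by
  rcases le_total R (x0 + x1) with h | h
  · have hx1 : x1 = R := hmin.trans (min_eq_left h)
    have h2 : R ≤ lam / (mu + tht) := by
      rw [le_div_iff₀ hpos]; nlinarith
    rw [hx1, min_eq_left h2]
  · have hx1 : x1 = x0 + x1 := hmin.trans (min_eq_right h)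
    have hx00 : x0 = 0 := by linarith
    have hv : x1 = lam / (mu + tht) := by
      field_simp; nlinarith
    rw [hv, min_eq_right (by rw [← hv]; linarith)]

/-- The fluid dynamics of the multi-class M/M/S+M model under the index priority policy `ι`
has a unique equilibrium point. -/
theorem mmsm_equilibrium_unique
    {K : ℕ} (hK : 1 ≤ K)
    (lam mu th tht c ct d dt : Fin K → ℝ) (S : ℝ)
    (hlam : ∀ k, 0 < lam k) (hmu : ∀ k, 0 < mu k) (hth : ∀ k, 0 < th k)
    (htht : ∀ k, 0 ≤ tht k) (hS : 0 < S)
    (iota : Fin K → ℝ)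
    (hiota : ∀ k, iota k = (c k + d k * th k) * (mu k + tht k) / th k - ct k - dt k * tht k)
    (hmono : ∀ k l : Fin K, k ≤ l → iota l ≤ iota k)
    (lh : ℕ) (hlh : lh = sInf ({n : ℕ | ∃ hn : n < K, iota ⟨n, hn⟩ ≤ 0} ∪ {K}))
    (x0 x1 y0 y1 : Fin K → ℝ)
    (hx : MMSMEquilibrium lam mu th tht S lh x0 x1)
    (hy : MMSMEquilibrium lam mu th tht S lh y0 y1) :
    x0 = y0 ∧ x1 = y1 := by
  obtain ⟨hx0n, hx1n, hxe, hxm, hxz⟩ := hx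
  obtain ⟨hy0n, hy1n, hye, hym, hyz⟩ := hy
  have main : ∀ n : ℕ, ∀ k : Fin K, k.val = n → x0 k = y0 k ∧ x1 k = y1 k := by
    intro n
    induction n using Nat.strong_induction_on with
    | _ n ih =>
      intro k hk
      have hpos : 0 < mu k + tht k := by linarith [hmu k, htht k]
      by_cases hkl : k.val < lh
      · have hsum : ∑ l ∈ Finset.Iio k, (x0 l + x1 l) = ∑ l ∈ Finset.Iio k, (y0 l + y1 l) := by
          refine Finset.sum_congr rfl fun l hl => ?_
          have hl' : l.val < n := by
            have h := Finset.mem_Iio.mp hl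
            omega
          obtain ⟨h0, h1⟩ := ih l.val hl' l rfl
          rw [h0, h1]
        have hX := key_min (lam k) (mu k) (th k) (tht k) _ (x0 k) (x1 k) hpos (hth k)
          (hx0n k) (hxe k) (hxm k hkl)
        have hY := key_min (lam k) (mu k) (th k) (tht k) _ (y0 k) (y1 k) hpos (hth k)
          (hy0n k) (hye k) (hym k hkl)
        have h1 : x1 k = y1 k := by rw [hX, hY, hsum]
        have h0 : x0 k = y0 k := by
          have e1 := hxe k
          have e2 := hye k
          have : th k * x0 k = th k * y0 k := by rw [h1] at e1; linarith
          exact mul_left_cancel₀ (ne_of_gt (hth k)) this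
        exact ⟨h0, h1⟩
      · have h1x := hxz k (le_of_not_gt hkl)
        have h1y := hyz k (le_of_not_gt hkl)
        have h0 : x0 k = y0 k := by
          have e1 := hxe k
          have e2 := hye k
          have : th k * x0 k = th k * y0 k := by rw [h1x] at e1; rw [h1y] at e2; linarith
          exact mul_left_cancel₀ (ne_of_gt (hth k)) this
        exact ⟨h0, h1x.trans h1y.symm⟩
  exact ⟨funext fun k => (main k.val k rfl).1, funext fun k => (main k.val k rfl).2⟩
end
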